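/- Let (M,ḡ) be a Riemannian manifold and h a symmetric C² (0,2)-tensor. For a scalar function f define the covector W_f = -h(∇f,·) + (1/2)(df)·tr h. Then (Δ'(h))f + (1/2)(Δf)·tr h = div W_f, where Δ'(h) is the linearization of the Laplace–Beltrami operator at ḡ in the direction h, given by (Δ'(h))f = -h^{ij}f_{;ij} + ḡ^{ij}(-(div h)_i + (1/2)(tr h)_{;i})f_{,j}. -/

import Mathlib

noncomputable section

open scoped BigOperators
open MeasureTheory Filter

/-- Points of the coordinate chart `ℝⁿ`. -/
abbrev Pt (n : ℕ) := Fin n → ℝ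

/-- Partial derivative of a scalar function in the `i`-th coordinate direction. -/
def pd {n : ℕ} (i : Fin n) (f : Pt n → ℝ) (x : Pt n) : ℝ :=
  fderiv ℝ f x (Pi.single i 1)

/-- Inverse metric `g^{ij}` (pointwise matrix inverse). -/
def ginv {n : ℕ} (g : Pt n → Fin n → Fin n → ℝ) (x : Pt n) (i j : Fin n) : ℝ :=
  (Matrix.of (g x))⁻¹ i j

/-- Christoffel symbols `Γ^k_{ij}` of the metric `g`. -/
def chr {n : ℕ} (g : Pt n → Fin n → Fin n → ℝ) (x : Pt n) (k i j : Fin n) : ℝ :=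
  (1/2) * ∑ l, ginv g x k l *
    (pd i (fun y => g y j l) x + pd j (fun y => g y i l) x - pd l (fun y => g y i j) x)

/-- Covariant derivative of a covector field: `X_{i;j}`. -/
def cdCov {n : ℕ} (g : Pt n → Fin n → Fin n → ℝ) (X : Pt n → Fin n → ℝ)
    (x : Pt n) (i j : Fin n) : ℝ :=
  pd j (fun y => X y i) x - ∑ k, chr g x k i j * X x k

/-- Covariant derivative of a vector field: `X^i_{;j}`. -/
def cdVec {n : ℕ} (g : Pt n → Fin n → Fin n → ℝ) (X : Pt n → Fin n → ℝ)
    (x : Pt n) (i j : Fin n) : ℝ :=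
  pd j (fun y => X y i) x + ∑ k, chr g x i k j * X x k

/-- Covariant derivative of a symmetric (0,2)-tensor: `h_{ij;k}`. -/
def cd2 {n : ℕ} (g : Pt n → Fin n → Fin n → ℝ) (h : Pt n → Fin n → Fin n → ℝ)
    (x : Pt n) (i j k : Fin n) : ℝ :=
  pd k (fun y => h y i j) x - ∑ l, chr g x l i k * h x l j - ∑ l, chr g x l j k * h x i l

/-- Second covariant derivative of a covector field: `X_{i;jk}`. -/
def cdCov2 {n : ℕ} (g : Pt n → Fin n → Fin n → ℝ) (X : Pt n → Fin n → ℝ)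
    (x : Pt n) (i j k : Fin n) : ℝ :=
  cd2 g (fun y a b => cdCov g X y a b) x i j k

/-- Riemann curvature tensor `R^l_{ijk}`. -/
def riem {n : ℕ} (g : Pt n → Fin n → Fin n → ℝ) (x : Pt n) (l i j k : Fin n) : ℝ :=
  pd j (fun y => chr g y l i k) x - pd k (fun y => chr g y l i j) x
  + ∑ m, chr g x l m j * chr g x m i k - ∑ m, chr g x l m k * chr g x m i j

/-- Riemann curvature with all indices lowered. -/
def riemLow {n : ℕ} (g : Pt n → Fin n → Fin n → ℝ) (x : Pt n) (a b c d : Fin n) : ℝ :=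
  ∑ l, g x a l * riem g x l b c d

/-- Ricci curvature `R_{ij}`. -/
def ric {n : ℕ} (g : Pt n → Fin n → Fin n → ℝ) (x : Pt n) (i j : Fin n) : ℝ :=
  ∑ l, riem g x l i l j

/-- Lower the index of a vector field using `g`. -/
def lowerV {n : ℕ} (g : Pt n → Fin n → Fin n → ℝ) (X : Pt n → Fin n → ℝ)
    (x : Pt n) (i : Fin n) : ℝ :=
  ∑ j, g x i j * X x j

/-- Lie derivative of the metric `g` along the vector field `X`:
`(L_X g)_{ij} = X_{i;j} + X_{j;i}` (index lowered by `g`). -/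
def lieg {n : ℕ} (g : Pt n → Fin n → Fin n → ℝ) (X : Pt n → Fin n → ℝ)
    (x : Pt n) (i j : Fin n) : ℝ :=
  cdCov g (lowerV g X) x i j + cdCov g (lowerV g X) x j i

/-- Hessian `f_{;ij}`. -/
def hess {n : ℕ} (g : Pt n → Fin n → Fin n → ℝ) (f : Pt n → ℝ)
    (x : Pt n) (i j : Fin n) : ℝ :=
  cdCov g (fun y a => pd a f y) x i j

/-- Laplace–Beltrami operator on functions. -/
def lapf {n : ℕ} (g : Pt n → Fin n → Fin n → ℝ) (f : Pt n → ℝ) (x : Pt n) : ℝ :=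
  ∑ i, ∑ j, ginv g x i j * hess g f x i j

/-- Trace of a (0,2)-tensor with respect to `g`. -/
def trT {n : ℕ} (g : Pt n → Fin n → Fin n → ℝ) (h : Pt n → Fin n → Fin n → ℝ)
    (x : Pt n) : ℝ :=
  ∑ i, ∑ j, ginv g x i j * h x i j

/-- Divergence of a (0,2)-tensor, as a covector. -/
def divT {n : ℕ} (g : Pt n → Fin n → Fin n → ℝ) (h : Pt n → Fin n → Fin n → ℝ)
    (x : Pt n) (i : Fin n) : ℝ :=
  ∑ j, ∑ k, ginv g x j k * cd2 g h x i j k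

/-- Bianchi operator `β_g h = -div_g h + (1/2) d (tr_g h)`. -/
def bianchi {n : ℕ} (g : Pt n → Fin n → Fin n → ℝ) (h : Pt n → Fin n → Fin n → ℝ)
    (x : Pt n) (i : Fin n) : ℝ :=
  -divT g h x i + (1/2) * pd i (fun y => trT g h y) x

/-- Gradient vector field `(∇f)^i`. -/
def gradV {n : ℕ} (g : Pt n → Fin n → Fin n → ℝ) (f : Pt n → ℝ)
    (x : Pt n) (i : Fin n) : ℝ :=
  ∑ j, ginv g x i j * pd j f x

/-- The tensor is symmetric. -/
def symT {n : ℕ} (g : Pt n → Fin n → Fin n → ℝ) : Prop :=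
  ∀ x i j, g x i j = g x j i

/-- `g` is pointwise positive definite. -/
def posdef {n : ℕ} (g : Pt n → Fin n → Fin n → ℝ) : Prop :=
  ∀ (x : Pt n) (v : Fin n → ℝ), v ≠ 0 → 0 < ∑ i, ∑ j, g x i j * v i * v j

/-- Smooth componentwise. -/
def smoothT {n : ℕ} (g : Pt n → Fin n → Fin n → ℝ) : Prop :=
  ∀ i j, ContDiff ℝ (⊤ : ℕ∞) (fun x => g x i j)

/-- The lowered tensor `(T_h)_{ijk} = (1/2)(h_{ij;k} + h_{ik;j} - h_{jk;i})`. -/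
def Tlow {n : ℕ} (g : Pt n → Fin n → Fin n → ℝ) (h : Pt n → Fin n → Fin n → ℝ)
    (x : Pt n) (i j k : Fin n) : ℝ :=
  (1/2) * (cd2 g h x i j k + cd2 g h x i k j - cd2 g h x j k i)

/-- The covector `W_f = -h(∇f,·) + (1/2)(df)·tr h`. -/
def Wf {n : ℕ} (g h : Pt n → Fin n → Fin n → ℝ) (f : Pt n → ℝ)
    (x : Pt n) (i : Fin n) : ℝ :=
  -(∑ j, ∑ k, h x i j * ginv g x j k * pd k f x) + (1/2) * pd i f x * trT g h x

/-- Explicit formula for the linearized Laplacian: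
`(Δ'(h))f = -h^{ij} f_{;ij} + g^{ij}(-(div h)_i + (1/2)(tr h)_{;i}) f_{,j}`. -/
def lapLinF {n : ℕ} (g h : Pt n → Fin n → Fin n → ℝ) (f : Pt n → ℝ) (x : Pt n) : ℝ :=
  -(∑ i, ∑ j, ∑ k, ∑ l, ginv g x i k * ginv g x j l * h x k l * hess g f x i j)
    + ∑ i, ∑ j, ginv g x i j *
        (-(divT g h x i) + (1/2) * pd i (fun y => trT g h y) x) * pd j f x

/-- Divergence of a covector field. -/
def divC {n : ℕ} (g : Pt n → Fin n → Fin n → ℝ) (W : Pt n → Fin n → ℝ)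
    (x : Pt n) : ℝ :=
  ∑ i, ∑ j, ginv g x i j * cdCov g W x i j

/-! ### Auxiliary lemmas -/

section Aux

variable {n : ℕ} {x : Pt n} {i : Fin n}

lemma pd_add {f g : Pt n → ℝ} (hf : DifferentiableAt ℝ f x) (hg : DifferentiableAt ℝ g x) :
    pd i (fun y => f y + g y) x = pd i f x + pd i g x := by
  unfold pd; rw [fderiv_fun_add hf hg]; rfl

lemma pd_neg {f : Pt n → ℝ} :
    pd i (fun y => -f y) x = -pd i f x := by
  unfold pd; rw [fderiv_fun_neg]; rfl

lemma pd_mul {f g : Pt n → ℝ} (hf : DifferentiableAt ℝ f x) (hg : DifferentiableAt ℝ g x) :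
    pd i (fun y => f y * g y) x = pd i f x * g x + f x * pd i g x := by
  unfold pd; rw [fderiv_fun_mul hf hg]; simp; ring

lemma pd_sum {s : Finset (Fin n)} {F : Fin n → Pt n → ℝ}
    (hF : ∀ j ∈ s, DifferentiableAt ℝ (F j) x) :
    pd i (fun y => ∑ j ∈ s, F j y) x = ∑ j ∈ s, pd i (F j) x := by
  unfold pd; rw [fderiv_fun_sum hF]; simp

lemma pd_const_mul {c : ℝ} {f : Pt n → ℝ} (hf : DifferentiableAt ℝ f x) :
    pd i (fun y => c * f y) x = c * pd i f x := by
  unfold pd; rw [fderiv_const_mul hf]; rfl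

lemma pd_const {c : ℝ} : pd i (fun _ => c) x = 0 := by
  unfold pd; rw [fderiv_fun_const]; rfl

end Aux

section Metric

variable {n : ℕ} {g : Pt n → Fin n → Fin n → ℝ}

lemma gdet_unit (hgpos : posdef g) (x : Pt n) : IsUnit (Matrix.of (g x)).det := by
  rw [isUnit_iff_ne_zero]
  intro h0
  obtain ⟨v, hv, hMv⟩ := (Matrix.exists_mulVec_eq_zero_iff).2 h0
  have := hgpos x v hv
  have hz : ∑ i, ∑ j, g x i j * v i * v j = 0 := by
    have hmv : ∀ i, (Matrix.of (g x)).mulVec v i = 0 := fun i => congrFun hMv i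
    calc ∑ i, ∑ j, g x i j * v i * v j = ∑ i, v i * ((Matrix.of (g x)).mulVec v i) := by
          refine Finset.sum_congr rfl fun i _ => ?_
          simp [Matrix.mulVec, dotProduct, Finset.mul_sum]
          exact Finset.sum_congr rfl fun j _ => by ring
      _ = 0 := by simp [hmv]
  linarith

lemma ginv_mul_g (hgpos : posdef g) (x : Pt n) (i j : Fin n) :
    ∑ k, ginv g x i k * g x k j = if i = j then 1 else 0 := by
  have := Matrix.nonsing_inv_mul (Matrix.of (g x)) (gdet_unit hgpos x)
  have h2 := congrFun (congrFun this i) j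
  rw [Matrix.mul_apply] at h2
  simpa [ginv, Matrix.one_apply] using h2

lemma g_mul_ginv (hgpos : posdef g) (x : Pt n) (i j : Fin n) :
    ∑ k, g x i k * ginv g x k j = if i = j then 1 else 0 := by
  have := Matrix.mul_nonsing_inv (Matrix.of (g x)) (gdet_unit hgpos x)
  have h2 := congrFun (congrFun this i) j
  rw [Matrix.mul_apply] at h2
  simpa [ginv, Matrix.one_apply] using h2

lemma ginv_symm (hgsym : symT g) (x : Pt n) (i j : Fin n) :
    ginv g x i j = ginv g x j i := by
  have ht : Matrix.transpose (Matrix.of (g x)) = Matrix.of (g x) := by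
    ext a b; simp [Matrix.transpose_apply, hgsym x b a]
  have := Matrix.transpose_nonsing_inv (Matrix.of (g x))
  rw [ht] at this
  have := congrFun (congrFun this.symm j) i
  simp only [ginv]
  simpa [Matrix.transpose_apply] using this.symm

lemma contDiff_det_comp {A : Pt n → Matrix (Fin n) (Fin n) ℝ}
    (hA : ∀ i j, ContDiff ℝ (⊤ : ℕ∞) fun x => A x i j) :
    ContDiff ℝ (⊤ : ℕ∞) fun x => (A x).det := by
  simp only [Matrix.det_apply]
  apply ContDiff.sum
  intro σ _
  have e : (fun x => Equiv.Perm.sign σ • ∏ i, A x (σ i) i)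
      = fun x => ((Equiv.Perm.sign σ : ℤ) : ℝ) * ∏ i, A x (σ i) i := by
    funext x; simp [Units.smul_def, zsmul_eq_mul]
  rw [e]
  exact contDiff_const.mul (contDiff_prod fun i _ => hA (σ i) i)

lemma contDiff_ginv (hgpos : posdef g) (hgsm : smoothT g) (i j : Fin n) :
    ContDiff ℝ (⊤ : ℕ∞) fun x => ginv g x i j := by
  have hdet : ContDiff ℝ (⊤ : ℕ∞) fun x => (Matrix.of (g x)).det := contDiff_det_comp hgsm
  have hadj : ContDiff ℝ (⊤ : ℕ∞) fun x => (Matrix.of (g x)).adjugate i j := by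
    simp only [Matrix.adjugate_apply]
    apply contDiff_det_comp
    intro a b
    by_cases hab : a = j <;> simp [Matrix.updateRow_apply, hab, hgsm a b, contDiff_const]
  have heq : (fun x => ginv g x i j)
      = fun x => ((Matrix.of (g x)).det)⁻¹ * (Matrix.of (g x)).adjugate i j := by
    funext x
    rw [ginv, Matrix.inv_def]
    simp [Ring.inverse_eq_inv']
  rw [heq]
  exact (hdet.inv fun x => (gdet_unit hgpos x).ne_zero).mul hadj

end Metric
section Diff

variable {n : ℕ} {g h : Pt n → Fin n → Fin n → ℝ} {f : Pt n → ℝ} {x : Pt n}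

lemma diff_g (hgsm : smoothT g) (i j : Fin n) : DifferentiableAt ℝ (fun y => g y i j) x :=
  ((hgsm i j).differentiable (by simp)) x

lemma diff_ginv (hgpos : posdef g) (hgsm : smoothT g) (i j : Fin n) :
    DifferentiableAt ℝ (fun y => ginv g y i j) x :=
  ((contDiff_ginv hgpos hgsm i j).differentiable (by simp)) x

lemma contDiff_pdf (hfsm : ContDiff ℝ (⊤ : ℕ∞) f) (i : Fin n) : ContDiff ℝ (⊤ : ℕ∞) fun y => pd i f y := by
  unfold pd
  exact (hfsm.fderiv_right (by simp)).clm_apply contDiff_const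

lemma diff_pdf (hfsm : ContDiff ℝ (⊤ : ℕ∞) f) (i : Fin n) :
    DifferentiableAt ℝ (fun y => pd i f y) x :=
  ((contDiff_pdf hfsm i).differentiable (by simp)) x

lemma diff_h (hhreg : ∀ i j, ContDiff ℝ 2 (fun x => h x i j)) (i j : Fin n) :
    DifferentiableAt ℝ (fun y => h y i j) x :=
  ((hhreg i j).differentiable (by simp)) x

lemma diff_trT (hgpos : posdef g) (hgsm : smoothT g)
    (hhreg : ∀ i j, ContDiff ℝ 2 (fun x => h x i j)) :
    DifferentiableAt ℝ (fun y => trT g h y) x := by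
  unfold trT
  exact DifferentiableAt.fun_sum fun i _ => DifferentiableAt.fun_sum fun j _ =>
    (diff_ginv hgpos hgsm i j).fun_mul (diff_h hhreg i j)

lemma diff_gradV (hgpos : posdef g) (hgsm : smoothT g) (hfsm : ContDiff ℝ (⊤ : ℕ∞) f) (k : Fin n) :
    DifferentiableAt ℝ (fun y => gradV g f y k) x := by
  unfold gradV
  exact DifferentiableAt.fun_sum fun j _ => (diff_ginv hgpos hgsm k j).fun_mul (diff_pdf hfsm j)

end Diff

section PdGinv

variable {n : ℕ} {g : Pt n → Fin n → Fin n → ℝ} {x : Pt n}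

lemma pd_g_symm (hgsym : symT g) (c a b : Fin n) :
    pd c (fun y => g y a b) x = pd c (fun y => g y b a) x := by
  congr 1; funext y; exact hgsym y a b

lemma pd_ginv (hgpos : posdef g) (hgsm : smoothT g) (m j k : Fin n) :
    pd m (fun y => ginv g y j k) x
      = -∑ a, ∑ b, ginv g x j a * pd m (fun y => g y a b) x * ginv g x b k := by
  have hdG : ∀ a b, DifferentiableAt ℝ (fun y => ginv g y a b) x :=
    fun a b => diff_ginv hgpos hgsm a b
  have hdg : ∀ a b, DifferentiableAt ℝ (fun y => g y a b) x := fun a b => diff_g hgsm a b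
  have key : ∀ l : Fin n, ∑ b, pd m (fun y => ginv g y j b) x * g x b l
      = -∑ b, ginv g x j b * pd m (fun y => g y b l) x := by
    intro l
    have h1 : (fun y => ∑ b, ginv g y j b * g y b l) = fun _ => if j = l then (1:ℝ) else 0 :=
      funext fun y => ginv_mul_g hgpos y j l
    have h2 : pd m (fun y => ∑ b, ginv g y j b * g y b l) x = 0 := by
      rw [h1]; exact pd_const
    rw [pd_sum (fun b _ => (hdG j b).fun_mul (hdg b l))] at h2
    have h3 : ∑ b, (pd m (fun y => ginv g y j b) x * g x b l
        + ginv g x j b * pd m (fun y => g y b l) x) = 0 := by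
      rw [← h2]
      exact Finset.sum_congr rfl fun b _ => (pd_mul (hdG j b) (hdg b l)).symm
    rw [Finset.sum_add_distrib] at h3
    linarith
  calc pd m (fun y => ginv g y j k) x
      = ∑ b, pd m (fun y => ginv g y j b) x * (if b = k then (1:ℝ) else 0) := by
        symm; simp [mul_ite]
    _ = ∑ b, pd m (fun y => ginv g y j b) x * (∑ l, g x b l * ginv g x l k) := by
        refine Finset.sum_congr rfl fun b _ => ?_
        rw [g_mul_ginv hgpos x b k]
    _ = ∑ b, ∑ l, pd m (fun y => ginv g y j b) x * g x b l * ginv g x l k := by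
        refine Finset.sum_congr rfl fun b _ => ?_
        rw [Finset.mul_sum]
        exact Finset.sum_congr rfl fun l _ => by ring
    _ = ∑ l, ∑ b, pd m (fun y => ginv g y j b) x * g x b l * ginv g x l k :=
        Finset.sum_comm
    _ = ∑ l, (∑ b, pd m (fun y => ginv g y j b) x * g x b l) * ginv g x l k := by
        refine Finset.sum_congr rfl fun l _ => ?_
        rw [Finset.sum_mul]
    _ = ∑ l, (-∑ b, ginv g x j b * pd m (fun y => g y b l) x) * ginv g x l k := by
        refine Finset.sum_congr rfl fun l _ => ?_
        rw [key l]
    _ = ∑ l, ∑ b, -(ginv g x j b * pd m (fun y => g y b l) x * ginv g x l k) := by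
        refine Finset.sum_congr rfl fun l _ => ?_
        rw [neg_mul, Finset.sum_mul, ← Finset.sum_neg_distrib]
    _ = ∑ b, ∑ l, -(ginv g x j b * pd m (fun y => g y b l) x * ginv g x l k) :=
        Finset.sum_comm
    _ = -∑ a, ∑ b, ginv g x j a * pd m (fun y => g y a b) x * ginv g x b k := by
        rw [← Finset.sum_neg_distrib]
        exact Finset.sum_congr rfl fun a _ => by rw [Finset.sum_neg_distrib]

end PdGinv
section MC

variable {n : ℕ} {g : Pt n → Fin n → Fin n → ℝ} {x : Pt n}

lemma metric_compat (hgsym : symT g) (j k m : Fin n) :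
    ∑ l, (chr g x k l j * ginv g x l m + ginv g x k l * chr g x m l j)
      = ∑ a, ∑ b, ginv g x k a * pd j (fun y => g y a b) x * ginv g x b m := by
  set E : Fin n → Fin n → ℝ := fun l a =>
    pd l (fun y => g y j a) x + pd j (fun y => g y l a) x - pd a (fun y => g y l j) x with hE
  have hchr : ∀ p l : Fin n, chr g x p l j = (1/2) * ∑ a, ginv g x p a * E l a := by
    intro p l; rw [chr]
  have c1 : ∀ l, chr g x k l j * ginv g x l m
      = ∑ a, (1/2) * (ginv g x k a * E l a) * ginv g x l m := by
    intro l
    rw [hchr k l, Finset.mul_sum, Finset.sum_mul]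
  have c2 : ∀ l, ginv g x k l * chr g x m l j
      = ∑ a, ginv g x k l * ((1/2) * (ginv g x m a * E l a)) := by
    intro l
    rw [hchr m l, Finset.mul_sum, Finset.mul_sum]
  calc ∑ l, (chr g x k l j * ginv g x l m + ginv g x k l * chr g x m l j)
      = ∑ l, ((∑ a, (1/2) * (ginv g x k a * E l a) * ginv g x l m)
          + ∑ a, ginv g x k l * ((1/2) * (ginv g x m a * E l a))) := by
        exact Finset.sum_congr rfl fun l _ => by rw [c1 l, c2 l]
    _ = (∑ l, ∑ a, (1/2) * (ginv g x k a * E l a) * ginv g x l m)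
          + ∑ l, ∑ a, ginv g x k l * ((1/2) * (ginv g x m a * E l a)) :=
        Finset.sum_add_distrib
    _ = (∑ l, ∑ a, (1/2) * (ginv g x k a * E l a) * ginv g x l m)
          + ∑ a, ∑ l, ginv g x k l * ((1/2) * (ginv g x m a * E l a)) := by
        rw [Finset.sum_comm (f := fun l a => ginv g x k l * ((1/2) * (ginv g x m a * E l a)))]
    _ = ∑ l, ∑ a, ((1/2) * (ginv g x k a * E l a) * ginv g x l m
          + ginv g x k a * ((1/2) * (ginv g x m l * E a l))) := by
        rw [← Finset.sum_add_distrib]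
        exact Finset.sum_congr rfl fun l _ => (Finset.sum_add_distrib).symm
    _ = ∑ l, ∑ a, ginv g x k a * pd j (fun y => g y l a) x * ginv g x l m := by
        refine Finset.sum_congr rfl fun l _ => Finset.sum_congr rfl fun a _ => ?_
        rw [ginv_symm hgsym x m l]
        simp only [hE]
        rw [pd_g_symm hgsym a j l, pd_g_symm hgsym j a l, pd_g_symm hgsym l a j]
        ring
    _ = ∑ a, ∑ b, ginv g x k a * pd j (fun y => g y b a) x * ginv g x b m :=
        Finset.sum_comm
    _ = ∑ a, ∑ b, ginv g x k a * pd j (fun y => g y a b) x * ginv g x b m := by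
        refine Finset.sum_congr rfl fun a _ => Finset.sum_congr rfl fun b _ => ?_
        rw [pd_g_symm hgsym j b a]

end MC
section GradVLem

variable {n : ℕ} {g : Pt n → Fin n → Fin n → ℝ} {f : Pt n → ℝ} {x : Pt n}

lemma cdVec_gradV (hgsym : symT g) (hgpos : posdef g) (hgsm : smoothT g)
    (hfsm : ContDiff ℝ (⊤ : ℕ∞) f) (k j : Fin n) :
    cdVec g (fun y a => gradV g f y a) x k j = ∑ l, ginv g x k l * hess g f x l j := by
  have hdG : ∀ a b, DifferentiableAt ℝ (fun y => ginv g y a b) x :=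
    fun a b => diff_ginv hgpos hgsm a b
  have hdf : ∀ a : Fin n, DifferentiableAt ℝ (fun y => pd a f y) x := fun a => diff_pdf hfsm a
  rw [cdVec]
  have e0 : (fun y => gradV g f y k) = fun y => ∑ l, ginv g y k l * pd l f y := by
    funext y; rw [gradV]
  have e1 : pd j (fun y => gradV g f y k) x
      = ∑ l, (pd j (fun y => ginv g y k l) x * pd l f x
          + ginv g x k l * pd j (fun y => pd l f y) x) := by
    rw [e0, pd_sum (fun l _ => (hdG k l).fun_mul (hdf l))]
    exact Finset.sum_congr rfl fun l _ => pd_mul (hdG k l) (hdf l)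
  rw [e1, Finset.sum_add_distrib]
  have hRHS : ∑ l, ginv g x k l * hess g f x l j
      = ∑ l, ginv g x k l * pd j (fun y => pd l f y) x
        - ∑ l, ∑ m, ginv g x k l * (chr g x m l j * pd m f x) := by
    rw [← Finset.sum_sub_distrib]
    refine Finset.sum_congr rfl fun l _ => ?_
    simp only [hess, cdCov]
    rw [mul_sub, Finset.mul_sum]
  rw [hRHS]
  have hPterm : ∑ l, pd j (fun y => ginv g y k l) x * pd l f x
      = -∑ m, (∑ a, ∑ b, ginv g x k a * pd j (fun y => g y a b) x * ginv g x b m)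
          * pd m f x := by
    rw [← Finset.sum_neg_distrib]
    refine Finset.sum_congr rfl fun l _ => ?_
    rw [pd_ginv hgpos hgsm j k l]
    exact neg_mul _ _
  have hchrterm : ∑ l, chr g x k l j * gradV g f x l
      = ∑ m, (∑ l, chr g x k l j * ginv g x l m) * pd m f x := by
    calc ∑ l, chr g x k l j * gradV g f x l
        = ∑ l, ∑ m, chr g x k l j * (ginv g x l m * pd m f x) := by
          refine Finset.sum_congr rfl fun l _ => ?_
          rw [gradV, Finset.mul_sum]
      _ = ∑ m, ∑ l, chr g x k l j * (ginv g x l m * pd m f x) := Finset.sum_comm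
      _ = ∑ m, (∑ l, chr g x k l j * ginv g x l m) * pd m f x := by
          refine Finset.sum_congr rfl fun m _ => ?_
          rw [Finset.sum_mul]
          exact Finset.sum_congr rfl fun l _ => by ring
  have hGchr : ∑ l, ∑ m, ginv g x k l * (chr g x m l j * pd m f x)
      = ∑ m, (∑ l, ginv g x k l * chr g x m l j) * pd m f x := by
    calc ∑ l, ∑ m, ginv g x k l * (chr g x m l j * pd m f x)
        = ∑ m, ∑ l, ginv g x k l * (chr g x m l j * pd m f x) := Finset.sum_comm
      _ = ∑ m, (∑ l, ginv g x k l * chr g x m l j) * pd m f x := by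
          refine Finset.sum_congr rfl fun m _ => ?_
          rw [Finset.sum_mul]
          exact Finset.sum_congr rfl fun l _ => by ring
  rw [hPterm, hchrterm, hGchr]
  have key : (∑ m, (∑ l, chr g x k l j * ginv g x l m) * pd m f x)
      + ∑ m, (∑ l, ginv g x k l * chr g x m l j) * pd m f x
      = ∑ m, (∑ a, ∑ b, ginv g x k a * pd j (fun y => g y a b) x * ginv g x b m)
          * pd m f x := by
    rw [← Finset.sum_add_distrib]
    refine Finset.sum_congr rfl fun m _ => ?_
    rw [← add_mul, ← Finset.sum_add_distrib, metric_compat hgsym j k m]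
  linarith [key]

end GradVLem
section HV

variable {n : ℕ} {g h : Pt n → Fin n → Fin n → ℝ} {f : Pt n → ℝ} {x : Pt n}

lemma cd2_symm12 (hhsym : symT h) (i j k : Fin n) :
    cd2 g h x i j k = cd2 g h x j i k := by
  simp only [cd2]
  have e : pd k (fun y => h y i j) x = pd k (fun y => h y j i) x := by
    congr 1; funext y; exact hhsym y i j
  have s1 : ∑ l, chr g x l i k * h x l j = ∑ l, chr g x l i k * h x j l :=
    Finset.sum_congr rfl fun l _ => by rw [hhsym x l j]
  have s2 : ∑ l, chr g x l j k * h x i l = ∑ l, chr g x l j k * h x l i :=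
    Finset.sum_congr rfl fun l _ => by rw [hhsym x i l]
  rw [e, s1, s2]
  ring

lemma cdCov_hV (hhd : ∀ a b, DifferentiableAt ℝ (fun y => h y a b) x)
    {V : Pt n → Fin n → ℝ} (hV : ∀ k, DifferentiableAt ℝ (fun y => V y k) x) (i j : Fin n) :
    cdCov g (fun y a => ∑ k, h y a k * V y k) x i j
      = ∑ k, cd2 g h x i k j * V x k + ∑ k, h x i k * cdVec g V x k j := by
  rw [cdCov]
  have e1 : pd j (fun y => ∑ k, h y i k * V y k) x
      = ∑ k, (pd j (fun y => h y i k) x * V x k + h x i k * pd j (fun y => V y k) x) := by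
    rw [pd_sum (fun k _ => (hhd i k).fun_mul (hV k))]
    exact Finset.sum_congr rfl fun k _ => pd_mul (hhd i k) (hV k)
  rw [e1, Finset.sum_add_distrib]
  have c0 : ∑ m, chr g x m i j * ∑ k, h x m k * V x k
      = ∑ k, (∑ l, chr g x l i j * h x l k) * V x k := by
    calc ∑ m, chr g x m i j * ∑ k, h x m k * V x k
        = ∑ m, ∑ k, chr g x m i j * (h x m k * V x k) := by
          exact Finset.sum_congr rfl fun m _ => Finset.mul_sum _ _ _
      _ = ∑ k, ∑ m, chr g x m i j * (h x m k * V x k) := Finset.sum_comm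
      _ = ∑ k, (∑ l, chr g x l i j * h x l k) * V x k := by
          refine Finset.sum_congr rfl fun k _ => ?_
          rw [Finset.sum_mul]
          exact Finset.sum_congr rfl fun l _ => by ring
  have r1 : ∑ k, cd2 g h x i k j * V x k
      = ∑ k, pd j (fun y => h y i k) x * V x k
        - ∑ k, (∑ l, chr g x l i j * h x l k) * V x k
        - ∑ k, (∑ l, chr g x l k j * h x i l) * V x k := by
    rw [← Finset.sum_sub_distrib, ← Finset.sum_sub_distrib]
    refine Finset.sum_congr rfl fun k _ => ?_
    rw [cd2]
    ring
  have r2 : ∑ k, h x i k * cdVec g V x k j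
      = ∑ k, h x i k * pd j (fun y => V y k) x
        + ∑ k, ∑ l, h x i k * (chr g x k l j * V x l) := by
    rw [← Finset.sum_add_distrib]
    refine Finset.sum_congr rfl fun k _ => ?_
    rw [cdVec, mul_add, Finset.mul_sum]
  have cancel : ∑ k, (∑ l, chr g x l k j * h x i l) * V x k
      = ∑ k, ∑ l, h x i k * (chr g x k l j * V x l) := by
    calc ∑ k, (∑ l, chr g x l k j * h x i l) * V x k
        = ∑ k, ∑ l, h x i l * (chr g x l k j * V x k) := by
          refine Finset.sum_congr rfl fun k _ => ?_
          rw [Finset.sum_mul]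
          exact Finset.sum_congr rfl fun l _ => by ring
      _ = ∑ k, ∑ l, h x i k * (chr g x k l j * V x l) := Finset.sum_comm
  rw [c0, r1, r2]
  linarith [cancel]

lemma cdCov_Wf (hgsym : symT g) (hgpos : posdef g) (hgsm : smoothT g)
    (hhreg : ∀ i j, ContDiff ℝ 2 (fun x => h x i j)) (hfsm : ContDiff ℝ (⊤ : ℕ∞) f) (i j : Fin n) :
    cdCov g (fun y a => Wf g h f y a) x i j
      = -(∑ k, cd2 g h x i k j * gradV g f x k
          + ∑ k, h x i k * (∑ l, ginv g x k l * hess g f x l j))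
        + (1/2) * (hess g f x i j * trT g h x
            + pd i f x * pd j (fun y => trT g h y) x) := by
  have hhd : ∀ a b, DifferentiableAt ℝ (fun y => h y a b) x := fun a b => diff_h hhreg a b
  have hVd : ∀ k, DifferentiableAt ℝ (fun y => gradV g f y k) x :=
    fun k => diff_gradV hgpos hgsm hfsm k
  have hdτ : DifferentiableAt ℝ (fun y => trT g h y) x := diff_trT hgpos hgsm hhreg
  have hW : (fun y (a : Fin n) => Wf g h f y a)
      = fun y a => -(∑ k, h y a k * gradV g f y k)
          + (1/2) * (pd a f y * trT g h y) := by
    funext y a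
    rw [Wf]
    have : ∑ p, ∑ q, h y a p * ginv g y p q * pd q f y = ∑ p, h y a p * gradV g f y p := by
      refine Finset.sum_congr rfl fun p _ => ?_
      rw [gradV, Finset.mul_sum]
      exact Finset.sum_congr rfl fun q _ => by ring
    rw [this]
    ring
  rw [hW, cdCov]
  have hdX : ∀ a, DifferentiableAt ℝ (fun y => ∑ k, h y a k * gradV g f y k) x := fun a =>
    DifferentiableAt.fun_sum fun k _ => (hhd a k).fun_mul (hVd k)
  have p1 : pd j (fun y => -(∑ k, h y i k * gradV g f y k)
        + (1/2) * (pd i f y * trT g h y)) x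
      = -(pd j (fun y => ∑ k, h y i k * gradV g f y k) x)
        + (1/2) * (pd j (fun y => pd i f y) x * trT g h x
            + pd i f x * pd j (fun y => trT g h y) x) := by
    rw [pd_add ((hdX i).fun_neg) (((diff_pdf hfsm i).fun_mul hdτ).const_mul _), pd_neg,
        pd_const_mul ((diff_pdf hfsm i).fun_mul hdτ), pd_mul (diff_pdf hfsm i) hdτ]
  rw [p1]
  have c1 : ∑ m, chr g x m i j * (-(∑ k, h x m k * gradV g f x k)
        + (1/2) * (pd m f x * trT g h x))
      = -(∑ m, chr g x m i j * ∑ k, h x m k * gradV g f x k)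
        + (1/2) * ((∑ m, chr g x m i j * pd m f x) * trT g h x) := by
    calc ∑ m, chr g x m i j * (-(∑ k, h x m k * gradV g f x k)
          + (1/2) * (pd m f x * trT g h x))
        = ∑ m, (-(chr g x m i j * ∑ k, h x m k * gradV g f x k)
            + (1/2) * (chr g x m i j * pd m f x * trT g h x)) :=
          Finset.sum_congr rfl fun m _ => by ring
      _ = -(∑ m, chr g x m i j * ∑ k, h x m k * gradV g f x k)
          + (1/2) * ((∑ m, chr g x m i j * pd m f x) * trT g h x) := by
          rw [Finset.sum_add_distrib, Finset.sum_neg_distrib]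
          congr 1
          rw [Finset.sum_mul, Finset.mul_sum]
  rw [c1]
  have hXc : pd j (fun y => ∑ k, h y i k * gradV g f y k) x
        - ∑ m, chr g x m i j * ∑ k, h x m k * gradV g f x k
      = ∑ k, cd2 g h x i k j * gradV g f x k
        + ∑ k, h x i k * (∑ l, ginv g x k l * hess g f x l j) := by
    have h1 := cdCov_hV (g := g) hhd (V := gradV g f) hVd i j
    rw [cdCov] at h1
    rw [h1]
    congr 1
    exact Finset.sum_congr rfl fun k _ => by
      rw [cdVec_gradV hgsym hgpos hgsm hfsm k j]
  have hhess : hess g f x i j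
      = pd j (fun y => pd i f y) x - ∑ m, chr g x m i j * pd m f x := by
    rw [hess, cdCov]
  rw [hhess]
  linear_combination -hXc

end HV
section Assemble

variable {n : ℕ}

lemma sum2_split4 (F1 F2 F3 F4 : Fin n → Fin n → ℝ) :
    ∑ i, ∑ j, (F1 i j + F2 i j + F3 i j + F4 i j)
      = (∑ i, ∑ j, F1 i j) + (∑ i, ∑ j, F2 i j) + (∑ i, ∑ j, F3 i j)
        + (∑ i, ∑ j, F4 i j) := by
  simp [Finset.sum_add_distrib]

lemma sum2_split2 (F1 F2 : Fin n → Fin n → ℝ) :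
    ∑ i, ∑ j, (F1 i j + F2 i j) = (∑ i, ∑ j, F1 i j) + (∑ i, ∑ j, F2 i j) := by
  simp [Finset.sum_add_distrib]

lemma sum2_neg (F : Fin n → Fin n → ℝ) :
    ∑ i, ∑ j, -(F i j) = -(∑ i, ∑ j, F i j) := by simp

lemma sum2_scal (c d : ℝ) (F : Fin n → Fin n → ℝ) :
    ∑ i, ∑ j, c * (F i j * d) = c * ((∑ i, ∑ j, F i j) * d) := by
  simp only [Finset.mul_sum, Finset.sum_mul]

lemma sum2_scal' (c : ℝ) (F : Fin n → Fin n → ℝ) :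
    ∑ i, ∑ j, c * F i j = c * ∑ i, ∑ j, F i j := by
  simp only [Finset.mul_sum]

lemma sum3_rot (F : Fin n → Fin n → Fin n → ℝ) :
    ∑ i, ∑ j, ∑ k, F i j k = ∑ k, ∑ i, ∑ j, F i j k := by
  calc ∑ i, ∑ j, ∑ k, F i j k
      = ∑ i, ∑ k, ∑ j, F i j k :=
        Finset.sum_congr rfl fun i _ => Finset.sum_comm
    _ = ∑ k, ∑ i, ∑ j, F i j k := Finset.sum_comm

lemma sum4_perm (F : Fin n → Fin n → Fin n → Fin n → ℝ) :
    ∑ i, ∑ j, ∑ k, ∑ l, F i j k l = ∑ i, ∑ j, ∑ k, ∑ l, F l j k i := by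
  calc ∑ i, ∑ j, ∑ k, ∑ l, F i j k l
      = ∑ i, ∑ j, ∑ l, ∑ k, F i j k l :=
        Finset.sum_congr rfl fun i _ => Finset.sum_congr rfl fun j _ => Finset.sum_comm
    _ = ∑ i, ∑ l, ∑ j, ∑ k, F i j k l :=
        Finset.sum_congr rfl fun i _ => Finset.sum_comm
    _ = ∑ l, ∑ i, ∑ j, ∑ k, F i j k l := Finset.sum_comm
    _ = ∑ l, ∑ j, ∑ i, ∑ k, F i j k l :=
        Finset.sum_congr rfl fun l _ => Finset.sum_comm
    _ = ∑ i, ∑ j, ∑ k, ∑ l, F l j k i :=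
        Finset.sum_congr rfl fun l _ => Finset.sum_congr rfl fun j _ => Finset.sum_comm

end Assemble
/-- `(Δ'(h))f + (1/2)(Δf)·tr h = div W_f` where
`W_f = -h(∇f,·) + (1/2)(df)·tr h`. -/
theorem statement11 {n : ℕ} (g h : Pt n → Fin n → Fin n → ℝ) (f : Pt n → ℝ)
    (hgsym : symT g) (hgpos : posdef g) (hgsm : smoothT g)
    (hhsym : symT h) (hhreg : ∀ i j, ContDiff ℝ 2 (fun x => h x i j))
    (hfsm : ContDiff ℝ (⊤ : ℕ∞) f) :
    ∀ x : Pt n,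
      lapLinF g h f x + (1/2) * lapf g f x * trT g h x
        = divC g (fun y a => Wf g h f y a) x := by
  intro x
  have hWc := fun (i j : Fin n) => cdCov_Wf (x := x) hgsym hgpos hgsm hhreg hfsm i j
  have split : ∀ i j : Fin n, ginv g x i j * cdCov g (fun y a => Wf g h f y a) x i j
      = -(ginv g x i j * ∑ k, cd2 g h x i k j * gradV g f x k)
        + -(ginv g x i j * ∑ k, h x i k * (∑ l, ginv g x k l * hess g f x l j))
        + (1/2) * ((ginv g x i j * hess g f x i j) * trT g h x)
        + (1/2) * (ginv g x i j * (pd i f x * pd j (fun y => trT g h y) x)) := by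
    intro i j; rw [hWc i j]; ring
  have hdivC : divC g (fun y a => Wf g h f y a) x
      = -(∑ i, ∑ j, ginv g x i j * ∑ k, cd2 g h x i k j * gradV g f x k)
        + -(∑ i, ∑ j, ginv g x i j * ∑ k, h x i k * (∑ l, ginv g x k l * hess g f x l j))
        + (1/2) * ((∑ i, ∑ j, ginv g x i j * hess g f x i j) * trT g h x)
        + (1/2) * (∑ i, ∑ j, ginv g x i j * (pd i f x * pd j (fun y => trT g h y) x)) := by
    rw [divC]
    calc ∑ i, ∑ j, ginv g x i j * cdCov g (fun y a => Wf g h f y a) x i j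
        = ∑ i, ∑ j, (-(ginv g x i j * ∑ k, cd2 g h x i k j * gradV g f x k)
            + -(ginv g x i j * ∑ k, h x i k * (∑ l, ginv g x k l * hess g f x l j))
            + (1/2) * ((ginv g x i j * hess g f x i j) * trT g h x)
            + (1/2) * (ginv g x i j * (pd i f x * pd j (fun y => trT g h y) x))) :=
          Finset.sum_congr rfl fun i _ => Finset.sum_congr rfl fun j _ => split i j
      _ = _ := by
          rw [sum2_split4, sum2_neg, sum2_neg, sum2_scal, sum2_scal']
  have hTa : ∑ i, ∑ j, ginv g x i j * ∑ k, cd2 g h x i k j * gradV g f x k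
      = ∑ k, gradV g f x k * divT g h x k := by
    calc ∑ i, ∑ j, ginv g x i j * ∑ k, cd2 g h x i k j * gradV g f x k
        = ∑ i, ∑ j, ∑ k, ginv g x i j * (cd2 g h x i k j * gradV g f x k) :=
          Finset.sum_congr rfl fun i _ => Finset.sum_congr rfl fun j _ =>
            Finset.mul_sum _ _ _
      _ = ∑ k, ∑ i, ∑ j, ginv g x i j * (cd2 g h x i k j * gradV g f x k) :=
          sum3_rot _
      _ = ∑ k, gradV g f x k * ∑ i, ∑ j, ginv g x i j * cd2 g h x k i j := by
          refine Finset.sum_congr rfl fun k _ => ?_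
          rw [Finset.mul_sum]
          refine Finset.sum_congr rfl fun i _ => ?_
          rw [Finset.mul_sum]
          refine Finset.sum_congr rfl fun j _ => ?_
          rw [cd2_symm12 hhsym i k j]
          ring
      _ = ∑ k, gradV g f x k * divT g h x k := by
          refine Finset.sum_congr rfl fun k _ => ?_
          rw [divT]
  have hTb : ∑ i, ∑ j, ginv g x i j * ∑ k, h x i k * (∑ l, ginv g x k l * hess g f x l j)
      = ∑ i, ∑ j, ∑ k, ∑ l, ginv g x i j * (h x i k * (ginv g x k l * hess g f x l j)) := by
    refine Finset.sum_congr rfl fun i _ => Finset.sum_congr rfl fun j _ => ?_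
    rw [Finset.mul_sum]
    refine Finset.sum_congr rfl fun k _ => ?_
    rw [Finset.mul_sum, Finset.mul_sum]
  have hQ : ∑ i, ∑ j, ∑ k, ∑ l, ginv g x i k * ginv g x j l * h x k l * hess g f x i j
      = ∑ i, ∑ j, ∑ k, ∑ l, ginv g x i j * (h x i k * (ginv g x k l * hess g f x l j)) := by
    calc ∑ i, ∑ j, ∑ k, ∑ l, ginv g x i k * ginv g x j l * h x k l * hess g f x i j
        = ∑ i, ∑ j, ∑ k, ∑ l, ginv g x l k * ginv g x j i * h x k i * hess g f x l j :=
          sum4_perm (fun i j k l => ginv g x i k * ginv g x j l * h x k l * hess g f x i j)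
      _ = ∑ i, ∑ j, ∑ k, ∑ l, ginv g x i j * (h x i k * (ginv g x k l * hess g f x l j)) := by
          refine Finset.sum_congr rfl fun i _ => Finset.sum_congr rfl fun j _ =>
            Finset.sum_congr rfl fun k _ => Finset.sum_congr rfl fun l _ => ?_
          rw [ginv_symm hgsym x l k, ginv_symm hgsym x j i, hhsym x k i]
          ring
  have l1 : ∑ i, ∑ j, ginv g x i j * (-divT g h x i + 1 / 2 * pd i (fun y => trT g h y) x)
        * pd j f x
      = -(∑ i, ∑ j, ginv g x i j * divT g h x i * pd j f x)
        + (1/2) * ∑ i, ∑ j, ginv g x i j * (pd i (fun y => trT g h y) x * pd j f x) := by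
    calc ∑ i, ∑ j, ginv g x i j * (-divT g h x i + 1 / 2 * pd i (fun y => trT g h y) x)
          * pd j f x
        = ∑ i, ∑ j, (-(ginv g x i j * divT g h x i * pd j f x)
            + (1/2) * (ginv g x i j * (pd i (fun y => trT g h y) x * pd j f x))) :=
          Finset.sum_congr rfl fun i _ => Finset.sum_congr rfl fun j _ => by ring
      _ = _ := by rw [sum2_split2, sum2_neg, sum2_scal']
  have hB1 : ∑ i, ∑ j, ginv g x i j * divT g h x i * pd j f x
      = ∑ k, gradV g f x k * divT g h x k := by
    refine Finset.sum_congr rfl fun i _ => ?_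
    rw [gradV, Finset.sum_mul]
    exact Finset.sum_congr rfl fun j _ => by ring
  have hB2 : ∑ i, ∑ j, ginv g x i j * (pd i (fun y => trT g h y) x * pd j f x)
      = ∑ i, ∑ j, ginv g x i j * (pd i f x * pd j (fun y => trT g h y) x) := by
    rw [Finset.sum_comm]
    refine Finset.sum_congr rfl fun i _ => Finset.sum_congr rfl fun j _ => ?_
    rw [ginv_symm hgsym x j i]
    ring
  rw [hdivC, hTa, hTb, lapLinF, lapf, l1, hQ, hB1, hB2]
  ring
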